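/- arXiv:1001.1396 — 2 statements merged into one kernel-verified Lean document; each statement's English description precedes it below -/
import Mathlib

section
/- Suppose (W, W') ∈ ℝ^k × ℝ^k is an exchangeable pair satisfying E(W'|W) = (I_k − Λ)W for an invertible matrix Λ, ‖W − W'‖₂ ≤ K, and E(e^{θᵗW}) < ∞ for all θ. Then for each coordinate i and every w_i ≥ 0, P(W_i ≥ w_i) ≤ exp(−w_i² / (2K²ν₁)) and P(W_i ≤ −w_i) ≤ exp(−w_i² / (2K²ν₁)), where ν₁ = 1/σ₁(Λ). -/
open MeasureTheory ProbabilityTheory Real Matrix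

/-- The Euclidean (ℓ²) norm on `Fin k → ℝ`. -/
noncomputable def norm2 {k : ℕ} (x : Fin k → ℝ) : ℝ := Real.sqrt (∑ i, x i ^ 2)

/-- The smallest singular value of a square real matrix: the infimum of `‖Λx‖₂`
over unit vectors `x`. -/
noncomputable def smallestSingularValue {k : ℕ} (Λ : Matrix (Fin k) (Fin k) ℝ) : ℝ :=
  sInf {r | ∃ x : Fin k → ℝ, norm2 x = 1 ∧ r = norm2 (Λ.mulVec x)}

/-!
Write `X = Wᵢ`, `D = (Λ⁻¹(W - W'))ᵢ` and `m(t) = E e^{tX}`. Conditioning on `W` in the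
regression condition gives the Stein identity `E[F(W) X] = E[F(W) D]`, and exchangeability turns
it into `E[F(W) X] = E[(F(W) - F(W')) D] / 2`. For `F(x) = e^{t xᵢ}`, the bounds
`|e^{tX} - e^{tX'}| ≤ |t| K (e^{tX} + e^{tX'})` and `σ₁(Λ) |D| ≤ ‖W - W'‖₂ ≤ K` give
`σ₁ |m'(t)| ≤ K² |t| m(t)`. Integrating `(log m)'` yields the sub-Gaussian bound
`m(t) ≤ exp (K² t² / (2 σ₁))`, and the Chernoff bound finishes.
-/

lemma norm2_eq_norm_toLp {k : ℕ} (x : Fin k → ℝ) : norm2 x = ‖WithLp.toLp 2 x‖ := by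
  simp [norm2, EuclideanSpace.norm_eq]

lemma abs_apply_le_norm2 {k : ℕ} (x : Fin k → ℝ) (i : Fin k) : |x i| ≤ norm2 x := by
  simpa [norm2_eq_norm_toLp] using PiLp.norm_apply_le (WithLp.toLp 2 x) i

lemma smallestSingularValue_nonneg {k : ℕ} (Λ : Matrix (Fin k) (Fin k) ℝ) :
    0 ≤ smallestSingularValue Λ :=
  Real.sInf_nonneg fun _ ⟨_, _, hr⟩ => hr ▸ Real.sqrt_nonneg _

lemma smallestSingularValue_mul_norm2_le {k : ℕ} (Λ : Matrix (Fin k) (Fin k) ℝ)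
    (x : Fin k → ℝ) : smallestSingularValue Λ * norm2 x ≤ norm2 (Λ *ᵥ x) := by
  rcases eq_or_ne x 0 with rfl | hx
  · simp [norm2]
  have hpos : 0 < norm2 x := by simpa [norm2_eq_norm_toLp] using hx
  have hunit : norm2 ((norm2 x)⁻¹ • x) = 1 := by
    rw [norm2_eq_norm_toLp, WithLp.toLp_smul, norm_smul, ← norm2_eq_norm_toLp,
      Real.norm_of_nonneg (inv_nonneg.2 hpos.le), inv_mul_cancel₀ hpos.ne']
  have hle : smallestSingularValue Λ ≤ norm2 (Λ *ᵥ ((norm2 x)⁻¹ • x)) :=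
    csInf_le ⟨0, fun _ ⟨y, _, hr⟩ => hr ▸ Real.sqrt_nonneg _⟩ ⟨_, hunit, rfl⟩
  rw [mulVec_smul, norm2_eq_norm_toLp, WithLp.toLp_smul, norm_smul, ← norm2_eq_norm_toLp,
    Real.norm_of_nonneg (inv_nonneg.2 hpos.le)] at hle
  rwa [← le_div_iff₀ hpos, div_eq_inv_mul]

lemma smallestSingularValue_mul_abs_inv_mulVec_le {k : ℕ} {Λ : Matrix (Fin k) (Fin k) ℝ}
    (hΛ : IsUnit Λ.det) (y : Fin k → ℝ) (i : Fin k) :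
    smallestSingularValue Λ * |(Λ⁻¹ *ᵥ y) i| ≤ norm2 y := by
  calc smallestSingularValue Λ * |(Λ⁻¹ *ᵥ y) i|
      ≤ smallestSingularValue Λ * norm2 (Λ⁻¹ *ᵥ y) :=
        mul_le_mul_of_nonneg_left (abs_apply_le_norm2 _ i) (smallestSingularValue_nonneg Λ)
    _ ≤ norm2 y := by
        simpa [mulVec_mulVec, mul_nonsing_inv Λ hΛ] using
          smallestSingularValue_mul_norm2_le Λ (Λ⁻¹ *ᵥ y)

lemma abs_le_exp_add_exp_neg (y : ℝ) : |y| ≤ exp y + exp (-y) := by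
  rw [abs_le]
  constructor <;> linarith [add_one_le_exp y, add_one_le_exp (-y), exp_pos y, exp_pos (-y)]

lemma abs_exp_sub_exp_le (a b : ℝ) : |exp a - exp b| ≤ |a - b| * (exp a + exp b) := by
  wlog hba : b ≤ a generalizing a b
  · simpa only [abs_sub_comm, add_comm] using this b a (le_of_not_ge hba)
  have h : exp a * (b - a + 1) ≤ exp b := by
    simpa [← exp_add] using mul_le_mul_of_nonneg_left (add_one_le_exp (b - a)) (exp_pos a).le
  rw [abs_of_nonneg (sub_nonneg.2 (exp_le_exp.2 hba)), abs_of_nonneg (sub_nonneg.2 hba)]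
  nlinarith [exp_pos b, sub_nonneg.2 hba]

lemma le_exp_sq_of_deriv_le {f f' : ℝ → ℝ} {c : ℝ} (hf0 : f 0 = 1) (hpos : ∀ t, 0 < f t)
    (hf : ∀ t, HasDerivAt f (f' t) t) (hf' : ∀ t, 0 < t → f' t ≤ c * t * f t) {t : ℝ}
    (ht : 0 ≤ t) : f t ≤ exp (c * t ^ 2 / 2) := by
  set φ : ℝ → ℝ := fun t => log (f t) - c * t ^ 2 / 2
  have hφ : ∀ t, HasDerivAt φ (f' t / f t - c * t) t := fun t => by
    have h := ((hf t).log (hpos t).ne').sub ((hasDerivAt_pow 2 t).const_mul c |>.div_const 2)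
    exact h.congr_deriv (by norm_num; ring)
  have hanti : AntitoneOn φ (Set.Ici 0) := by
    refine antitoneOn_of_deriv_nonpos (convex_Ici 0)
      (HasDerivAt.continuousOn fun t _ => hφ t)
      (fun t _ => (hφ t).differentiableAt.differentiableWithinAt) fun t ht => ?_
    rw [interior_Ici] at ht
    rw [(hφ t).deriv, sub_nonpos, div_le_iff₀ (hpos t)]
    exact hf' t ht
  have hφt : φ t ≤ 0 := by simpa [φ, hf0] using hanti Set.self_mem_Ici ht ht
  rw [← exp_log (hpos t)]
  exact exp_le_exp.2 (sub_nonpos.1 hφt)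

lemma le_exp_sq_of_abs_deriv_le {f f' : ℝ → ℝ} {c : ℝ} (hf0 : f 0 = 1) (hpos : ∀ t, 0 < f t)
    (hf : ∀ t, HasDerivAt f (f' t) t) (hf' : ∀ t, |f' t| ≤ c * |t| * f t) (t : ℝ) :
    f t ≤ exp (c * t ^ 2 / 2) := by
  rcases le_total 0 t with ht | ht
  · refine le_exp_sq_of_deriv_le hf0 hpos hf (fun s hs => ?_) ht
    simpa [abs_of_pos hs] using (le_abs_self _).trans (hf' s)
  · have hreflect := le_exp_sq_of_deriv_le (f := fun s => f (-s)) (f' := fun s => -f' (-s))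
      (c := c) (by simpa using hf0) (fun s => hpos (-s))
      (fun s => by
        have h := (hf (-s)).comp s (hasDerivAt_neg s)
        simp only [mul_neg, mul_one] at h
        exact h) (fun s hs => by
        simpa [abs_of_pos hs] using (neg_le_abs _).trans (hf' (-s))) (neg_nonneg.2 ht)
    simpa using hreflect

lemma hasSubgaussianMGF_of_abs_integral_mul_exp_le {Ω : Type*} [MeasurableSpace Ω]
    {μ : Measure Ω} [IsProbabilityMeasure μ] {X : Ω → ℝ} {c : NNReal}
    (hint : ∀ t, Integrable (fun ω => exp (t * X ω)) μ)
    (hderiv : ∀ t, |μ[fun ω => X ω * exp (t * X ω)]| ≤ c * |t| * mgf X μ t) :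
    HasSubgaussianMGF X c μ where
  integrable_exp_mul := hint
  mgf_le := le_exp_sq_of_abs_deriv_le mgf_zero (fun t => mgf_pos (hint t))
    (fun t => hasDerivAt_mgf (by simp [integrableExpSet, hint])) hderiv

lemma integral_mul_eq_of_condExp_ae_eq {Ω : Type*} {m m₀ : MeasurableSpace Ω} {μ : Measure Ω}
    (hm : m ≤ m₀) [SigmaFinite (μ.trim hm)] {f g h : Ω → ℝ} (hf : StronglyMeasurable[m] f)
    (hfg : Integrable (fun ω => f ω * g ω) μ) (hg : Integrable g μ) (hgh : μ[g|m] =ᵐ[μ] h) :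
    ∫ ω, f ω * g ω ∂μ = ∫ ω, f ω * h ω ∂μ :=
  calc ∫ ω, f ω * g ω ∂μ = ∫ ω, (μ[f * g|m]) ω ∂μ := (integral_condExp hm).symm
    _ = ∫ ω, f ω * h ω ∂μ := integral_congr_ae <|
        (condExp_mul_of_stronglyMeasurable_left hf hfg hg).trans
          (hgh.mono fun ω hω => by simp only [Pi.mul_apply, hω])

section MulVec

variable {Ω : Type*} [MeasurableSpace Ω] {μ : Measure Ω} {m n : Type*} [Fintype n]
  {f : Ω → ℝ} {V : Ω → n → ℝ}

lemma integrable_mul_mulVec_apply (A : Matrix m n ℝ)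
    (hV : ∀ j, Integrable (fun ω => f ω * V ω j) μ) (i : m) :
    Integrable (fun ω => f ω * (A *ᵥ V ω) i) μ := by
  simp only [mulVec, dotProduct, Finset.mul_sum, mul_left_comm (f _)]
  exact integrable_finsetSum _ fun j _ => (hV j).const_mul (A i j)

lemma integral_mul_mulVec_apply (A : Matrix m n ℝ)
    (hV : ∀ j, Integrable (fun ω => f ω * V ω j) μ) (i : m) :
    ∫ ω, f ω * (A *ᵥ V ω) i ∂μ = (A *ᵥ fun j => ∫ ω, f ω * V ω j ∂μ) i := by
  simp only [mulVec, dotProduct, Finset.mul_sum, mul_left_comm (f _)]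
  rw [integral_finsetSum _ fun j _ => (hV j).const_mul (A i j)]
  simp only [integral_const_mul]

end MulVec

section ExponentialMoments

variable {Ω : Type*} [MeasurableSpace Ω] {μ : Measure Ω} {k : ℕ} {W : Ω → Fin k → ℝ}

lemma integrable_exp_mul_apply_add_mul_apply
    (hmgf : ∀ θ : Fin k → ℝ, Integrable (fun ω => exp (θ ⬝ᵥ W ω)) μ) (a b : ℝ) (i j : Fin k) :
    Integrable (fun ω => exp (a * W ω i + b * W ω j)) μ := by
  have h := hmgf (Pi.single i a + Pi.single j b)
  simp only [add_dotProduct, single_dotProduct] at h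
  exact h

lemma integrable_exp_mul_apply
    (hmgf : ∀ θ : Fin k → ℝ, Integrable (fun ω => exp (θ ⬝ᵥ W ω)) μ) (t : ℝ) (i : Fin k) :
    Integrable (fun ω => exp (t * W ω i)) μ := by
  simpa using integrable_exp_mul_apply_add_mul_apply hmgf t 0 i i

lemma integrable_exp_mul_apply_mul_apply (hW : Measurable W)
    (hmgf : ∀ θ : Fin k → ℝ, Integrable (fun ω => exp (θ ⬝ᵥ W ω)) μ) (t : ℝ) (i j : Fin k) :
    Integrable (fun ω => exp (t * W ω i) * W ω j) μ := by
  refine ((integrable_exp_mul_apply_add_mul_apply hmgf t 1 i j).add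
    (integrable_exp_mul_apply_add_mul_apply hmgf t (-1) i j)).mono' (by fun_prop)
    (ae_of_all _ fun ω => ?_)
  rw [norm_mul, norm_of_nonneg (exp_pos _).le, norm_eq_abs]
  calc exp (t * W ω i) * |W ω j| ≤ exp (t * W ω i) * (exp (W ω j) + exp (-W ω j)) :=
        mul_le_mul_of_nonneg_left (abs_le_exp_add_exp_neg _) (exp_pos _).le
    _ = _ := by
      simp only [mul_add, ← exp_add, one_mul, neg_one_mul, ← sub_eq_add_neg, Pi.add_apply]

end ExponentialMoments

structure IsLinearSteinPair {Ω : Type*} [MeasurableSpace Ω] (μ : Measure Ω) {k : ℕ}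
    (W W' : Ω → Fin k → ℝ) (Λ : Matrix (Fin k) (Fin k) ℝ) : Prop where
  measurable : Measurable W
  measurable' : Measurable W'
  identDistrib_swap : IdentDistrib (fun ω => (W ω, W' ω)) (fun ω => (W' ω, W ω)) μ μ
  isUnit_det : IsUnit Λ.det
  condExp_ae_eq : ∀ i, μ[fun ω => W' ω i | MeasurableSpace.comap W inferInstance]
    =ᵐ[μ] fun ω => ((1 - Λ) *ᵥ W ω) i

namespace IsLinearSteinPair

variable {Ω : Type*} [MeasurableSpace Ω] {μ : Measure Ω} {k : ℕ} {W W' : Ω → Fin k → ℝ}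
  {Λ : Matrix (Fin k) (Fin k) ℝ}

theorem integral_mul_apply_eq_integral_mul_inv_mulVec (h : IsLinearSteinPair μ W W' Λ)
    [IsFiniteMeasure μ] {F : (Fin k → ℝ) → ℝ} (hF : Measurable F)
    (hFW : ∀ j, Integrable (fun ω => F (W ω) * W ω j) μ)
    (hFW' : ∀ j, Integrable (fun ω => F (W ω) * W' ω j) μ)
    (hW' : ∀ j, Integrable (fun ω => W' ω j) μ) (i : Fin k) :
    ∫ ω, F (W ω) * W ω i ∂μ = ∫ ω, F (W ω) * (Λ⁻¹ *ᵥ (W ω - W' ω)) i ∂μ := by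
  have hm : MeasurableSpace.comap W inferInstance ≤ ‹MeasurableSpace Ω› :=
    h.measurable.comap_le
  have hFm : StronglyMeasurable[MeasurableSpace.comap W inferInstance] fun ω => F (W ω) :=
    (hF.comp (comap_measurable W)).stronglyMeasurable
  set b : Fin k → ℝ := fun j => ∫ ω, F (W ω) * W ω j ∂μ
  have hFWsub : ∀ j, Integrable (fun ω => F (W ω) * (W ω - W' ω) j) μ := fun j =>
    ((hFW j).sub (hFW' j)).congr (ae_of_all _ fun ω => by simp [mul_sub])
  have hdiff : (fun j => ∫ ω, F (W ω) * (W ω - W' ω) j ∂μ) = Λ *ᵥ b := by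
    ext j
    rw [show Λ = 1 - (1 - Λ) by abel, sub_mulVec, one_mulVec, Pi.sub_apply,
      ← integral_mul_mulVec_apply _ hFW, ← integral_mul_eq_of_condExp_ae_eq hm hFm (hFW' j)
        (hW' j) (h.condExp_ae_eq j), ← integral_sub (hFW j) (hFW' j)]
    simp only [Pi.sub_apply, mul_sub]
  rw [integral_mul_mulVec_apply _ hFWsub, hdiff, mulVec_mulVec, nonsing_inv_mul _ h.isUnit_det,
    one_mulVec]

theorem integral_mul_apply_eq_integral_sub_mul_div_two (h : IsLinearSteinPair μ W W' Λ)
    [IsFiniteMeasure μ] {F : (Fin k → ℝ) → ℝ} (hF : Measurable F)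
    (hFW : ∀ j, Integrable (fun ω => F (W ω) * W ω j) μ)
    (hFW' : ∀ j, Integrable (fun ω => F (W ω) * W' ω j) μ)
    (hW' : ∀ j, Integrable (fun ω => W' ω j) μ) (i : Fin k) :
    ∫ ω, F (W ω) * W ω i ∂μ
      = (∫ ω, (F (W ω) - F (W' ω)) * (Λ⁻¹ *ᵥ (W ω - W' ω)) i ∂μ) / 2 := by
  set g : (Fin k → ℝ) × (Fin k → ℝ) → ℝ := fun p => F p.1 * (Λ⁻¹ *ᵥ (p.1 - p.2)) i
  have hg : Measurable g := by fun_prop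
  have hswap := h.identDistrib_swap.comp hg
  have hint : Integrable (fun ω => g (W ω, W' ω)) μ :=
    integrable_mul_mulVec_apply _ (fun j =>
      ((hFW j).sub (hFW' j)).congr (ae_of_all _ fun ω => by simp [mul_sub])) i
  have hsplit : ∀ ω, (F (W ω) - F (W' ω)) * (Λ⁻¹ *ᵥ (W ω - W' ω)) i
      = g (W ω, W' ω) + g (W' ω, W ω) := fun ω => by
    simp only [g, ← neg_sub (W ω) (W' ω), mulVec_neg, Pi.neg_apply]
    ring
  have hint' : Integrable (fun ω => g (W' ω, W ω)) μ := hswap.integrable_iff.1 hint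
  have hswap_eq : ∫ ω, g (W' ω, W ω) ∂μ = ∫ ω, g (W ω, W' ω) ∂μ := hswap.integral_eq.symm
  simp only [hsplit]
  rw [integral_add hint hint', hswap_eq, add_self_div_two,
    h.integral_mul_apply_eq_integral_mul_inv_mulVec hF hFW hFW' hW' i]

lemma integrable_exp_mul_apply_mul_snd_apply (h : IsLinearSteinPair μ W W' Λ) {K : ℝ}
    (hK : ∀ᵐ ω ∂μ, norm2 (fun i => W ω i - W' ω i) ≤ K)
    (hmgf : ∀ θ : Fin k → ℝ, Integrable (fun ω => exp (θ ⬝ᵥ W ω)) μ) (t : ℝ) (i j : Fin k) :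
    Integrable (fun ω => exp (t * W ω i) * W' ω j) μ := by
  have hW := h.measurable
  have hW' := h.measurable'
  refine ((integrable_exp_mul_apply_mul_apply hW hmgf t i j).norm.add
    ((integrable_exp_mul_apply hmgf t i).const_mul K)).mono' (by fun_prop) ?_
  filter_upwards [hK] with ω hω
  have hj := (abs_apply_le_norm2 (fun l => W ω l - W' ω l) j).trans hω
  have hW'j : |W' ω j| ≤ |W ω j| + K := by
    linarith [hj, abs_sub_abs_le_abs_sub (W' ω j) (W ω j), abs_sub_comm (W' ω j) (W ω j)]
  simp only [norm_mul, norm_of_nonneg (exp_pos _).le, norm_eq_abs, Pi.add_apply]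
  linarith [mul_le_mul_of_nonneg_left hW'j (exp_pos (t * W ω i)).le]

lemma integrable_snd_apply (h : IsLinearSteinPair μ W W' Λ) {K : ℝ}
    (hK : ∀ᵐ ω ∂μ, norm2 (fun i => W ω i - W' ω i) ≤ K)
    (hmgf : ∀ θ : Fin k → ℝ, Integrable (fun ω => exp (θ ⬝ᵥ W ω)) μ) (j : Fin k) :
    Integrable (fun ω => W' ω j) μ := by
  simpa using h.integrable_exp_mul_apply_mul_snd_apply hK hmgf 0 j j

theorem smallestSingularValue_mul_abs_integral_mul_exp_le (h : IsLinearSteinPair μ W W' Λ)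
    [IsProbabilityMeasure μ] {K : ℝ} (hK : ∀ᵐ ω ∂μ, norm2 (fun i => W ω i - W' ω i) ≤ K)
    (hmgf : ∀ θ : Fin k → ℝ, Integrable (fun ω => exp (θ ⬝ᵥ W ω)) μ) (i : Fin k) (t : ℝ) :
    smallestSingularValue Λ * |μ[fun ω => W ω i * exp (t * W ω i)]|
      ≤ K ^ 2 * |t| * mgf (fun ω => W ω i) μ t := by
  set σ := smallestSingularValue Λ
  have hσ : 0 ≤ σ := smallestSingularValue_nonneg Λ
  set D : Ω → ℝ := fun ω => (Λ⁻¹ *ᵥ (W ω - W' ω)) i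
  have hexp : Measurable fun x : Fin k → ℝ => exp (t * x i) := by fun_prop
  have hhalf := h.integral_mul_apply_eq_integral_sub_mul_div_two hexp
    (integrable_exp_mul_apply_mul_apply h.measurable hmgf t i)
    (h.integrable_exp_mul_apply_mul_snd_apply hK hmgf t i) (h.integrable_snd_apply hK hmgf) i
  have hident : IdentDistrib (fun ω => exp (t * W ω i)) (fun ω => exp (t * W' ω i)) μ μ :=
    (h.identDistrib_swap.comp measurable_fst).comp hexp
  have hint := integrable_exp_mul_apply hmgf t i
  have hbound : ∀ᵐ ω ∂μ, ‖σ * ((exp (t * W ω i) - exp (t * W' ω i)) * D ω)‖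
      ≤ K ^ 2 * |t| * (exp (t * W ω i) + exp (t * W' ω i)) := by
    filter_upwards [hK] with ω hω
    have hcoord : |t * W ω i - t * W' ω i| ≤ |t| * K := by
      rw [← mul_sub, abs_mul]
      exact mul_le_mul_of_nonneg_left
        ((abs_apply_le_norm2 (fun l => W ω l - W' ω l) i).trans hω) (abs_nonneg t)
    have hD : σ * |D ω| ≤ K :=
      (smallestSingularValue_mul_abs_inv_mulVec_le h.isUnit_det _ i).trans hω
    have hexp_diff := (abs_exp_sub_exp_le (t * W ω i) (t * W' ω i)).trans
      (mul_le_mul_of_nonneg_right hcoord (by positivity))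
    rw [norm_mul, norm_mul, norm_of_nonneg hσ, norm_eq_abs, norm_eq_abs]
    calc σ * (|exp (t * W ω i) - exp (t * W' ω i)| * |D ω|)
        = |exp (t * W ω i) - exp (t * W' ω i)| * (σ * |D ω|) := by ring
      _ ≤ (|t| * K * (exp (t * W ω i) + exp (t * W' ω i))) * K :=
          mul_le_mul hexp_diff hD (by positivity)
            (mul_nonneg ((abs_nonneg _).trans hcoord) (by positivity))
      _ = K ^ 2 * |t| * (exp (t * W ω i) + exp (t * W' ω i)) := by ring
  calc σ * |μ[fun ω => W ω i * exp (t * W ω i)]|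
      = ‖∫ ω, σ * ((exp (t * W ω i) - exp (t * W' ω i)) * D ω) ∂μ‖ / 2 := by
        rw [integral_const_mul, norm_mul, norm_of_nonneg hσ, norm_eq_abs, mul_div_assoc]
        simp only [mul_comm (W _ i), hhalf, abs_div, D]
        norm_num
    _ ≤ (∫ ω, K ^ 2 * |t| * (exp (t * W ω i) + exp (t * W' ω i)) ∂μ) / 2 := by
        gcongr
        exact norm_integral_le_of_norm_le ((hint.add (hident.integrable_iff.1 hint)).const_mul _)
          hbound
    _ = K ^ 2 * |t| * mgf (fun ω => W ω i) μ t := by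
        rw [integral_const_mul, integral_add hint (hident.integrable_iff.1 hint),
          ← hident.integral_eq, mgf]
        ring

theorem hasSubgaussianMGF_apply (h : IsLinearSteinPair μ W W' Λ) [IsProbabilityMeasure μ]
    {K : ℝ} (hK : ∀ᵐ ω ∂μ, norm2 (fun i => W ω i - W' ω i) ≤ K)
    (hmgf : ∀ θ : Fin k → ℝ, Integrable (fun ω => exp (θ ⬝ᵥ W ω)) μ)
    (hσ : 0 < smallestSingularValue Λ) (i : Fin k) :
    HasSubgaussianMGF (fun ω => W ω i) (K ^ 2 / smallestSingularValue Λ).toNNReal μ := by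
  refine hasSubgaussianMGF_of_abs_integral_mul_exp_le (fun t => integrable_exp_mul_apply hmgf t i)
    fun t => ?_
  rw [Real.coe_toNNReal _ (by positivity), div_mul_eq_mul_div, div_mul_eq_mul_div,
    le_div_iff₀ hσ, mul_comm]
  exact h.smallestSingularValue_mul_abs_integral_mul_exp_le hK hmgf i t

end IsLinearSteinPair

/-- Coordinatewise concentration via exchangeable pairs:
`P(Wᵢ ≥ wᵢ), P(Wᵢ ≤ -wᵢ) ≤ exp(-wᵢ²/(2K²ν₁))` where `ν₁ = 1/σ₁(Λ)`. -/
theorem coordinate_concentration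
    {Ω : Type*} [MeasurableSpace Ω] (μ : Measure Ω) [IsProbabilityMeasure μ]
    {k : ℕ} (W W' : Ω → Fin k → ℝ)
    (hWmeas : Measurable W) (hW'meas : Measurable W')
    (hexch : IdentDistrib (fun ω => (W ω, W' ω)) (fun ω => (W' ω, W ω)) μ μ)
    (Λ : Matrix (Fin k) (Fin k) ℝ) (hΛ : IsUnit Λ.det)
    (hcond : ∀ i, μ[fun ω => W' ω i | MeasurableSpace.comap W inferInstance]
      =ᵐ[μ] fun ω => ∑ j, (1 - Λ) i j * W ω j)
    (K : ℝ) (hK : ∀ᵐ ω ∂μ, norm2 (fun i => W ω i - W' ω i) ≤ K)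
    (hmgf : ∀ θ : Fin k → ℝ, Integrable (fun ω => Real.exp (θ ⬝ᵥ W ω)) μ)
    (i : Fin k) (w : ℝ) (hw : 0 ≤ w) :
    μ {ω | w ≤ W ω i}
        ≤ ENNReal.ofReal
            (Real.exp (-(w ^ 2 / (2 * K ^ 2 * (1 / smallestSingularValue Λ))))) ∧
      μ {ω | W ω i ≤ -w}
        ≤ ENNReal.ofReal
            (Real.exp (-(w ^ 2 / (2 * K ^ 2 * (1 / smallestSingularValue Λ))))) := by
  rcases (smallestSingularValue_nonneg Λ).eq_or_lt with hσ | hσ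
  · -- `1 / 0 = 0`: for `σ₁(Λ) = 0` the claimed bound is `exp 0 = 1`.
    simp [← hσ, prob_le_one]
  have hX := IsLinearSteinPair.hasSubgaussianMGF_apply ⟨hWmeas, hW'meas, hexch, hΛ, hcond⟩
    hK hmgf hσ i
  have hexponent : -(w ^ 2 / (2 * K ^ 2 * (1 / smallestSingularValue Λ)))
      = -w ^ 2 / (2 * (K ^ 2 / smallestSingularValue Λ).toNNReal) := by
    rw [Real.coe_toNNReal _ (by positivity)]
    ring
  rw [hexponent, ← ofReal_measureReal, ← ofReal_measureReal]
  refine ⟨ENNReal.ofReal_le_ofReal (hX.measure_ge_le hw), ENNReal.ofReal_le_ofReal ?_⟩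
  simpa [le_neg] using hX.neg.measure_ge_le hw
end

section
/- Let W ∈ ℝ^k be a random vector with nonnegative coordinates, mean vector μ ≻ 0, and for each i let W^i be the W-size biased vector in direction i, satisfying E(W_i f(W)) = μ_i E(f(W^i)). If ‖W − W^i‖₂ ≤ K almost surely for each i, then for all θ with ‖θ‖₂ < 2/K, ∂m(θ)/∂θ_i ≤ μ_i (2 + K‖θ‖₂)/(2 − K‖θ‖₂) · m(θ), where m(θ) = E(e^{θᵗW}). -/
open MeasureTheory Matrix

theorem norm2_nonneg {k : ℕ} (x : Fin k → ℝ) : 0 ≤ norm2 x := Real.sqrt_nonneg _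

theorem norm2_sub_comm {k : ℕ} (x y : Fin k → ℝ) :
    norm2 (fun j => x j - y j) = norm2 (fun j => y j - x j) := by
  simp only [norm2, sub_sq_comm]

theorem dotProduct_le_norm2_mul_norm2 {k : ℕ} (x y : Fin k → ℝ) :
    x ⬝ᵥ y ≤ norm2 x * norm2 y :=
  Real.sum_mul_le_sqrt_mul_sqrt Finset.univ x y

theorem exp_dotProduct_le_of_norm2_sub_le {k : ℕ} {θ x y : Fin k → ℝ} {K : ℝ}
    (hxy : norm2 (fun j => x j - y j) ≤ K) :
    Real.exp (θ ⬝ᵥ y) ≤ Real.exp (K * norm2 θ) * Real.exp (θ ⬝ᵥ x) := by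
  have hshift : θ ⬝ᵥ y = θ ⬝ᵥ (fun j => y j - x j) + θ ⬝ᵥ x := by
    simp only [dotProduct, mul_sub, Finset.sum_sub_distrib, sub_add_cancel]
  have hmove : θ ⬝ᵥ (fun j => y j - x j) ≤ K * norm2 θ :=
    calc θ ⬝ᵥ (fun j => y j - x j) ≤ norm2 θ * norm2 (fun j => x j - y j) := by
          rw [norm2_sub_comm]; exact dotProduct_le_norm2_mul_norm2 _ _
      _ ≤ K * norm2 θ := by rw [mul_comm]; gcongr; exact norm2_nonneg θ
  rw [hshift, Real.exp_add]
  gcongr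

theorem size_bias_partial_deriv_bound_general
    {Ω : Type*} [MeasurableSpace Ω] (μ : Measure Ω)
    {k : ℕ} (W : Ω → Fin k → ℝ) (Ws : Fin k → Ω → Fin k → ℝ)
    (μv : Fin k → ℝ) (hμpos : ∀ i, 0 < μv i)
    (hsb : ∀ (i : Fin k) (f : (Fin k → ℝ) → ℝ),
      Integrable (fun ω => W ω i * f (W ω)) μ → Integrable (fun ω => f (Ws i ω)) μ →
      ∫ ω, W ω i * f (W ω) ∂μ = μv i * ∫ ω, f (Ws i ω) ∂μ)
    (K : ℝ)
    (hK : ∀ i, ∀ᵐ ω ∂μ, norm2 (fun j => W ω j - Ws i ω j) ≤ K)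
    (hint : ∀ θ : Fin k → ℝ, Integrable (fun ω => Real.exp (θ ⬝ᵥ W ω)) μ)
    (hint' : ∀ (i : Fin k) (θ : Fin k → ℝ),
      Integrable (fun ω => Real.exp (θ ⬝ᵥ Ws i ω)) μ)
    (hint'' : ∀ (i : Fin k) (θ : Fin k → ℝ),
      Integrable (fun ω => W ω i * Real.exp (θ ⬝ᵥ W ω)) μ)
    (θ : Fin k → ℝ) (hθ : norm2 θ < 2 / K) (i : Fin k) :
    ∫ ω, W ω i * Real.exp (θ ⬝ᵥ W ω) ∂μ
      ≤ μv i * ((2 + K * norm2 θ) / (2 - K * norm2 θ)) *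
          ∫ ω, Real.exp (θ ⬝ᵥ W ω) ∂μ := by
  have hKpos : 0 < K :=
    (div_pos_iff_of_pos_left two_pos).1 ((norm2_nonneg θ).trans_lt hθ)
  have hKθ : K * norm2 θ < 2 := (lt_div_iff₀' hKpos).1 hθ
  rw [hsb i (fun x => Real.exp (θ ⬝ᵥ x)) (hint'' i θ) (hint' i θ), mul_assoc]
  refine mul_le_mul_of_nonneg_left ?_ (hμpos i).le
  rw [← integral_const_mul]
  refine integral_mono_ae (hint' i θ) ((hint θ).const_mul _) ?_
  filter_upwards [hK i] with ω hω
  calc Real.exp (θ ⬝ᵥ Ws i ω) ≤ Real.exp (K * norm2 θ) * Real.exp (θ ⬝ᵥ W ω) :=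
        exp_dotProduct_le_of_norm2_sub_le hω
    _ ≤ _ := by
        gcongr
        exact Real.exp_le_two_add_div_two_sub (by positivity [norm2_nonneg θ]) hKθ

/-- Size-bias gradient bound: if `W` has nonnegative coordinates, `W^i` is the
direction-`i` size biased version of `W`, and `‖W - W^i‖₂ ≤ K` a.s. for each `i`,
then for `‖θ‖₂ < 2/K`,
`∂m(θ)/∂θ_i = E(W_i e^{θᵗW}) ≤ μ_i (2 + K‖θ‖₂)/(2 - K‖θ‖₂) m(θ)`. -/
theorem size_bias_partial_deriv_bound
    {Ω : Type*} [MeasurableSpace Ω] (μ : Measure Ω) [IsProbabilityMeasure μ]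
    {k : ℕ} (W : Ω → Fin k → ℝ) (Ws : Fin k → Ω → Fin k → ℝ)
    (hpos : ∀ ω i, 0 ≤ W ω i)
    (μv : Fin k → ℝ) (hμv : ∀ i, μv i = ∫ ω, W ω i ∂μ) (hμpos : ∀ i, 0 < μv i)
    (hsb : ∀ (i : Fin k) (f : (Fin k → ℝ) → ℝ),
      Integrable (fun ω => W ω i * f (W ω)) μ → Integrable (fun ω => f (Ws i ω)) μ →
      ∫ ω, W ω i * f (W ω) ∂μ = μv i * ∫ ω, f (Ws i ω) ∂μ)
    (K : ℝ) (hKpos : 0 < K)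
    (hK : ∀ i, ∀ᵐ ω ∂μ, norm2 (fun j => W ω j - Ws i ω j) ≤ K)
    (hint : ∀ θ : Fin k → ℝ, Integrable (fun ω => Real.exp (θ ⬝ᵥ W ω)) μ)
    (hint' : ∀ (i : Fin k) (θ : Fin k → ℝ),
      Integrable (fun ω => Real.exp (θ ⬝ᵥ Ws i ω)) μ)
    (hint'' : ∀ (i : Fin k) (θ : Fin k → ℝ),
      Integrable (fun ω => W ω i * Real.exp (θ ⬝ᵥ W ω)) μ)
    (θ : Fin k → ℝ) (hθ : norm2 θ < 2 / K) (i : Fin k) :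
    ∫ ω, W ω i * Real.exp (θ ⬝ᵥ W ω) ∂μ
      ≤ μv i * ((2 + K * norm2 θ) / (2 - K * norm2 θ)) *
          ∫ ω, Real.exp (θ ⬝ᵥ W ω) ∂μ :=
  size_bias_partial_deriv_bound_general μ W Ws μv hμpos hsb K hK hint hint' hint'' θ hθ i
end
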